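/- arXiv:1008.3090 — 6 statements merged into one kernel-verified Lean document; each statement's English description precedes it below -/
import Mathlib

section
/- Let M be a finitely generated integral commutative monoid, T the torsion subgroup of M^gp, and N the image of M in M^gp/T. Then the saturation of N inside M^gp/T is a fine, saturated, torsion-free monoid, and for every element a of this saturation there exist b ∈ N and a positive integer m with b = m·a. -/
/-!
If `N` is generated by a finite set `s` and `m • x = ∑ v ∈ s, a v • v`, dividing each `a v`
by `m` with remainder writes `x` as an element of `N` plus a point of the half-open zonotope
`∑ v ∈ s, [0, 1) • v`. In the lattice `M^gp / T ≅ ℤ^r` such points have bounded coordinates,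
so there are finitely many of them, and together with `s` they generate the saturation of `N`.
-/

/-- The saturation of an additive submonoid `M` of an abelian group `G`: the elements `g`
such that `n • g ∈ M` for some positive integer `n`. -/
def AddSubmonoid.saturationOld {G : Type*} [AddCommGroup G] (M : AddSubmonoid G) :
    AddSubmonoid G where
  carrier := {g | ∃ n : ℕ, 0 < n ∧ n • g ∈ M}
  zero_mem' := ⟨1, one_pos, by simpa using M.zero_mem⟩
  add_mem' := by
    rintro a b ⟨n, hn, ha⟩ ⟨m, hm, hb⟩
    refine ⟨n * m, Nat.mul_pos hn hm, ?_⟩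
    have h1 : (n * m) • a ∈ M := by
      rw [mul_comm, mul_smul]; exact AddSubmonoid.nsmul_mem M ha m
    have h2 : (n * m) • b ∈ M := by
      rw [mul_smul]; exact AddSubmonoid.nsmul_mem M hb n
    rw [smul_add]; exact M.add_mem h1 h2

theorem abs_le_sum_abs_of_nsmul_eq_sum {R ι : Type*} [AddCommGroup R] [LinearOrder R]
    [IsOrderedAddMonoid R] {s : Finset ι} {m : ℕ} (hm : 0 < m) {c : ι → ℕ}
    (hc : ∀ i ∈ s, c i < m) {a : R} {b : ι → R} (h : m • a = ∑ i ∈ s, c i • b i) :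
    |a| ≤ ∑ i ∈ s, |b i| := by
  refine le_of_nsmul_le_nsmul_right hm.ne' ?_
  calc m • |a| = |∑ i ∈ s, c i • b i| := by rw [← h, abs_nsmul]
    _ ≤ ∑ i ∈ s, |c i • b i| := Finset.abs_sum_le_sum_abs _ _
    _ = ∑ i ∈ s, c i • |b i| := by simp only [abs_nsmul]
    _ ≤ ∑ i ∈ s, m • |b i| :=
      Finset.sum_le_sum fun i hi => nsmul_le_nsmul_left (abs_nonneg _) (hc i hi).le
    _ = m • ∑ i ∈ s, |b i| := Finset.smul_sum.symm

theorem AddGroup.fg_of_addSubmonoid_fg {G : Type*} [AddCommGroup G] {M : AddSubmonoid G}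
    (hfg : M.FG) (hgp : ∀ g : G, ∃ a ∈ M, ∃ b ∈ M, g = a - b) : AddGroup.FG G := by
  obtain ⟨s, rfl⟩ := hfg
  have hle :
      AddSubmonoid.closure (s : Set G) ≤ (AddSubgroup.closure (s : Set G)).toAddSubmonoid :=
    AddSubmonoid.closure_le.mpr AddSubgroup.subset_closure
  refine ⟨⟨s, AddSubgroup.eq_top_iff' _ |>.mpr fun g => ?_⟩⟩
  obtain ⟨a, ha, b, hb, rfl⟩ := hgp g
  exact sub_mem (hle ha) (hle hb)

section HalfOpenZonotope

variable {Q : Type*} [AddCommGroup Q]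

/-- The points of `Q` in the half-open zonotope `∑ v ∈ s, [0, 1) • v`, with rational
coefficients `c v / m`. -/
def halfOpenZonotope (s : Finset Q) : Set Q :=
  {y | ∃ m : ℕ, 0 < m ∧ ∃ c : Q → ℕ, (∀ v ∈ s, c v < m) ∧ m • y = ∑ v ∈ s, c v • v}

theorem halfOpenZonotope_finite [Module.Free ℤ Q] [Module.Finite ℤ Q] (s : Finset Q) :
    (halfOpenZonotope s).Finite := by
  classical
  let e := (Module.Free.chooseBasis ℤ Q).equivFun
  let C : _ → ℤ := fun j => ∑ v ∈ s, |e v j|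
  refine ((Set.finite_Icc (-C) C).preimage e.injective.injOn).subset ?_
  rintro y ⟨m, hm, c, hc, hy⟩
  have hbound (j) : |e y j| ≤ C j := abs_le_sum_abs_of_nsmul_eq_sum hm hc <| by
    simpa [map_sum, Finset.sum_apply] using congrFun (congrArg e hy) j
  exact ⟨fun j => (abs_le.mp (hbound j)).1, fun j => (abs_le.mp (hbound j)).2⟩

namespace AddSubmonoid

theorem le_saturationOld (N : AddSubmonoid Q) : N ≤ N.saturationOld :=
  fun _ hx => ⟨1, one_pos, by rwa [one_smul]⟩

theorem mem_saturationOld_of_nsmul_mem {N : AddSubmonoid Q} {g : Q} {n : ℕ} (hn : 0 < n)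
    (hg : n • g ∈ N.saturationOld) : g ∈ N.saturationOld := by
  obtain ⟨m, hm, hmn⟩ := hg
  exact ⟨m * n, Nat.mul_pos hm hn, by rwa [mul_smul]⟩

theorem saturationOld_closure_eq (s : Finset Q) :
    (closure (s : Set Q)).saturationOld = closure (s ∪ halfOpenZonotope s) := by
  classical
  apply le_antisymm
  · rintro x ⟨m, hm, hmx⟩
    obtain ⟨a, -, hax⟩ := mem_closure_finset.mp hmx
    set P := ∑ v ∈ s, (a v / m) • v
    have hmy : m • (x - P) = ∑ v ∈ s, (a v % m) • v := by
      rw [smul_sub, ← hax, sub_eq_iff_eq_add, Finset.smul_sum, ← Finset.sum_add_distrib]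
      refine Finset.sum_congr rfl fun v _ => ?_
      rw [smul_smul, ← add_smul, Nat.mod_add_div]
    have hP : P ∈ closure (s ∪ halfOpenZonotope s) :=
      sum_mem _ fun v hv => nsmul_mem (subset_closure (Set.mem_union_left _ hv)) _
    have hy : x - P ∈ halfOpenZonotope s :=
      ⟨m, hm, fun v => a v % m, fun v _ => Nat.mod_lt _ hm, hmy⟩
    simpa using add_mem hP (subset_closure (Set.mem_union_right _ hy))
  · refine closure_le.mpr ?_
    rintro v (hv | ⟨m, hm, c, -, hmv⟩)
    · exact le_saturationOld _ (subset_closure hv)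
    · exact ⟨m, hm, hmv ▸ sum_mem _ fun w hw => nsmul_mem (subset_closure hw) _⟩

theorem FG.saturationOld [Module.Free ℤ Q] [Module.Finite ℤ Q] {N : AddSubmonoid Q}
    (hN : N.FG) : N.saturationOld.FG := by
  obtain ⟨s, rfl⟩ := hN
  rw [saturationOld_closure_eq]
  exact (fg_iff _).mpr ⟨_, rfl, s.finite_toSet.union (halfOpenZonotope_finite s)⟩

end AddSubmonoid

end HalfOpenZonotope

/-- Let `M` be a finitely generated integral commutative monoid, realized as
a submonoid of its Grothendieck group `G`, let `T` be the torsion subgroup of `G = M^gp`, and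
let `N` be the image of `M` in `G ⧸ T`.  Then the saturation of `N` inside `G ⧸ T` is a fine
(finitely generated), saturated, torsion-free monoid, and every element `a` of this saturation
admits `b ∈ N` and a positive integer `m` with `b = m • a`. -/
theorem saturation_mod_torsion_fine_saturated_torsionFree
    {G : Type*} [AddCommGroup G] (M : AddSubmonoid G) (hfg : M.FG)
    (hgp : ∀ g : G, ∃ a ∈ M, ∃ b ∈ M, g = a - b) :
    let T := AddCommGroup.torsion G
    let N := M.map (QuotientAddGroup.mk' T)
    N.saturationOld.FG ∧
    (∀ g : G ⧸ T, (∃ n : ℕ, 0 < n ∧ n • g ∈ N.saturationOld) → g ∈ N.saturationOld) ∧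
    (∀ g : G ⧸ T, g ≠ 0 → ¬IsOfFinAddOrder g) ∧
    (∀ a ∈ N.saturationOld, ∃ b ∈ N, ∃ m : ℕ, 0 < m ∧ b = m • a) := by
  intro T N
  have : AddGroup.FG G := AddGroup.fg_of_addSubmonoid_fg hfg hgp
  have : Module.Finite ℤ (G ⧸ T) := Module.Finite.iff_addGroup_fg.mpr (QuotientAddGroup.fg T)
  refine ⟨(hfg.map _).saturationOld, ?_,
    fun g hg => not_isOfFinAddOrder_of_isAddTorsionFree hg, ?_⟩
  · rintro g ⟨n, hn, hg⟩
    exact AddSubmonoid.mem_saturationOld_of_nsmul_mem hn hg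
  · rintro a ⟨n, hn, hna⟩
    exact ⟨n • a, hna, n, hn, rfl⟩
end

section
/- Let P be a fine, saturated, sharp commutative monoid. If e ∈ P is an irreducible element lying on an extremal ray of the rational cone generated by P in P^gp ⊗ ℚ, and the submonoid N ⊆ P satisfies that every element of P has a positive multiple in N, then some positive multiple n·e of e lies in N and is a generator of N in the sense that whenever n·e = b + c with b, c ∈ N, b and c are nonnegative rational multiples of e and one of them vanishes. -/
/-- Let `P` be a fine, saturated, sharp (toric) commutative monoid, realized
as a submonoid of its Grothendieck group `G`.  If `e ∈ P` is an irreducible element lying on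
an extremal ray of the rational cone generated by `P`, and `N ⊆ P` is a submonoid such that
every element of `P` has a positive multiple in `N`, then some positive multiple `n • e` lies
in `N` and, whenever `n • e = b + c` with `b, c ∈ N`, both `b` and `c` are nonnegative
rational multiples of `e` and one of them vanishes. -/
theorem irreducible_extremal_generator
    {G : Type*} [AddCommGroup G] (P N : AddSubmonoid G) (hNP : N ≤ P)
    (hPfg : P.FG)
    (hgen : ∀ g : G, ∃ a ∈ P, ∃ b ∈ P, g = a - b)
    (hsat : ∀ g : G, (∃ n : ℕ, 0 < n ∧ n • g ∈ P) → g ∈ P)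
    (hsharp : ∀ g ∈ P, -g ∈ P → g = 0)
    (htf : ∀ (n : ℕ) (g : G), 0 < n → n • g = 0 → g = 0)
    (e : G) (heP : e ∈ P) (hne : e ≠ 0)
    (hirr : ∀ a ∈ P, ∀ b ∈ P, e = a + b → a = 0 ∨ b = 0)
    (hext : ∀ u ∈ P, ∀ v ∈ P, ∀ k : ℕ, 0 < k → k • e = u + v →
      ∃ p q m : ℕ, 0 < m ∧ m • u = p • e ∧ m • v = q • e)
    (hmul : ∀ a ∈ P, ∃ m : ℕ, 0 < m ∧ m • a ∈ N) :
    ∃ n : ℕ, 0 < n ∧ n • e ∈ N ∧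
      ∀ b ∈ N, ∀ c ∈ N, n • e = b + c →
        (∃ p m : ℕ, 0 < m ∧ m • b = p • e) ∧
        (∃ q m : ℕ, 0 < m ∧ m • c = q • e) ∧
        (b = 0 ∨ c = 0) := by
  -- injectivity of n ↦ n • e
  have einj : ∀ a b : ℕ, a • e = b • e → a = b := by
    intro a b h
    rcases le_total a b with hab | hab
    · by_contra hne'
      have hb : b = a + (b - a) := by omega
      rw [hb, add_smul] at h
      have h0 : (b - a) • e = 0 := by
        have := h.symm
        nth_rewrite 2 [← add_zero (a • e)] at this
        exact add_left_cancel this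
      exact hne (htf (b - a) e (by omega) h0)
    · by_contra hne'
      have ha : a = b + (a - b) := by omega
      rw [ha, add_smul] at h
      have h0 : (a - b) • e = 0 := by
        nth_rewrite 2 [← add_zero (b • e)] at h
        exact add_left_cancel h
      exact hne (htf (a - b) e (by omega) h0)
  -- key: any element of P which is a rational multiple of e is a natural multiple of e
  have key : ∀ a ∈ P, ∀ m p : ℕ, 0 < m → m • a = p • e → ∃ k : ℕ, a = k • e := by
    intro a haP m p hm hmp
    set d := Nat.gcd m p with hd_def
    have hd : 0 < d := Nat.gcd_pos_of_pos_left p hm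
    set m' := m / d with hm'_def
    set p' := p / d with hp'_def
    have hdm : d * m' = m := Nat.mul_div_cancel' (Nat.gcd_dvd_left m p)
    have hdp : d * p' = p := Nat.mul_div_cancel' (Nat.gcd_dvd_right m p)
    have hm' : 0 < m' := Nat.div_pos (Nat.gcd_le_left p hm) hd
    have h2 : m' • a = p' • e := by
      have h1 : d • (m' • a - p' • e) = 0 := by
        rw [smul_sub, ← mul_smul, ← mul_smul, hdm, hdp, hmp, sub_self]
      have := htf d _ hd h1
      exact sub_eq_zero.mp this
    have cop : Nat.Coprime m' p' := Nat.coprime_div_gcd_div_gcd hd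
    have hbz := Nat.gcd_eq_gcd_ab m' p'
    rw [cop] at hbz
    set x := Nat.gcdA m' p' with hx
    set y := Nat.gcdB m' p' with hy
    set g := y • a + x • e with hg_def
    have hg : (m' : ℤ) • g = e := by
      have hpz : (m' : ℤ) • a = (p' : ℤ) • e := by
        rw [natCast_zsmul, natCast_zsmul]; exact_mod_cast h2
      rw [hg_def, smul_add, smul_comm (m' : ℤ) y a, hpz, smul_smul, smul_smul, ← add_smul]
      have h1 : y * (p' : ℤ) + (m' : ℤ) * x = 1 := by push_cast at hbz; linarith
      rw [h1, one_smul]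
    have hgP : g ∈ P := by
      apply hsat g ⟨m', hm', ?_⟩
      have : m' • g = e := by rw [← natCast_zsmul g m', hg]
      rw [this]; exact heP
    have hmg : m' • g = e := by rw [← natCast_zsmul g m', hg]
    rcases Nat.lt_or_ge m' 2 with h1 | h1
    · have : m' = 1 := by omega
      rw [this, one_smul] at h2
      exact ⟨p', h2⟩
    · exfalso
      have hsplit : e = g + (m' - 1) • g := by
        rw [← hmg]
        nth_rewrite 1 [show m' = 1 + (m' - 1) by omega]
        rw [add_smul, one_smul]
      rcases hirr g hgP ((m' - 1) • g) (nsmul_mem hgP (m' - 1)) hsplit with h0 | h0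
      · rw [h0, smul_zero] at hmg; exact hne hmg.symm
      · have := htf (m' - 1) g (by omega) h0
        rw [this, smul_zero] at hmg; exact hne hmg.symm
  classical
  have hex : ∃ n : ℕ, 0 < n ∧ n • e ∈ N := hmul e heP
  set n := Nat.find hex with hn_def
  obtain ⟨hnpos, hnN⟩ := Nat.find_spec hex
  refine ⟨n, hnpos, hnN, ?_⟩
  intro b hb c hc hbc
  obtain ⟨p, q, m, hm, hpb, hqc⟩ := hext b (hNP hb) c (hNP hc) n hnpos hbc
  obtain ⟨p₁, hb'⟩ := key b (hNP hb) m p hm hpb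
  obtain ⟨q₁, hc'⟩ := key c (hNP hc) m q hm hqc
  refine ⟨⟨p₁, 1, one_pos, by rw [one_smul, hb']⟩,
    ⟨q₁, 1, one_pos, by rw [one_smul, hc']⟩, ?_⟩
  have hsum : n = p₁ + q₁ := by
    apply einj
    rw [hbc, hb', hc', add_smul]
  by_contra hno
  push_neg at hno
  obtain ⟨hb0, hc0⟩ := hno
  have hp₁ : 0 < p₁ := by
    rcases Nat.eq_zero_or_pos p₁ with h | h
    · exfalso; apply hb0; rw [hb', h, zero_smul]
    · exact h
  have hq₁ : 0 < q₁ := by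
    rcases Nat.eq_zero_or_pos q₁ with h | h
    · exfalso; apply hc0; rw [hc', h, zero_smul]
    · exact h
  have hlt : p₁ < n := by omega
  exact Nat.find_min hex hlt ⟨hp₁, by rw [← hb']; exact hb⟩
end

section
/- Let G be an admissible marked graph and M̄(G) its associated fine saturated sharp monoid. If e ∈ M̄(G) is an irreducible element lying on an extremal ray of the cone C(M̄(G)) ⊆ M̄(G)^gp ⊗ ℚ, then there exist a positive integer n such that either n·e equals the element e_v associated to some minimal vertex v, or n·e equals the element e_l associated to some edge l. -/
/-!
By sharpness and saturation, an element `q` with `a • q = b • e` (`a > 0`) is an integral multiple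
of the irreducible element `e`: reduce `b` modulo `a` and split `e` accordingly. Extremality turns
every nonzero summand of a decomposition of `k • e` into such an element, so descending through a
sum of generators `e_v`, `e_l` equal to a multiple of `e` yields a generator that is a positive
multiple of `e`. If it is `e_v` for a non-minimal `v`, the relation `e_v = e_{v'} + c_l • e_l` with
`c_l > 0` and extremality once more make `e_l` a positive multiple of `e`.
-/

namespace AddSubmonoid

variable {G : Type*} [AddCommGroup G] {Q : AddSubmonoid G}

theorem eq_zero_of_nsmul_eq_zero_of_sharp (hsharp : ∀ g ∈ Q, -g ∈ Q → g = 0) {g : G}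
    (hg : g ∈ Q) {k : ℕ} (hk : k ≠ 0) (h : k • g = 0) : g = 0 := by
  obtain ⟨j, rfl⟩ := Nat.exists_eq_succ_of_ne_zero hk
  rw [succ_nsmul] at h
  exact hsharp g hg ((eq_neg_of_add_eq_zero_left h) ▸ nsmul_mem hg j)

theorem exists_pos_nsmul_eq_of_nsmul_eq_nsmul (hsat : Q.NSMulSaturated)
    (hsharp : ∀ g ∈ Q, -g ∈ Q → g = 0) {e : G} (he : e ∈ Q) (hne : e ≠ 0)
    (hirr : ∀ a ∈ Q, ∀ b ∈ Q, e = a + b → a = 0 ∨ b = 0) {q : G} (hq : q ≠ 0) {a b : ℕ}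
    (ha : 0 < a) (h : a • q = b • e) : ∃ n : ℕ, 0 < n ∧ n • e = q := by
  set n := b / a
  set r := b % a
  have hx : a • (q - n • e) = r • e := by
    rw [smul_sub, h, smul_smul, ← Nat.div_add_mod b a, add_nsmul, add_sub_cancel_left]
  have hy : a • (e - (q - n • e)) = (a - r) • e := by
    rw [smul_sub, hx, sub_nsmul e (Nat.mod_lt b ha).le, sub_eq_add_neg]
  have hxQ : q - n • e ∈ Q := (hsat (hx ▸ nsmul_mem he r)).resolve_left ha.ne'
  have hyQ : e - (q - n • e) ∈ Q := (hsat (hy ▸ nsmul_mem he _)).resolve_left ha.ne'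
  rcases hirr _ hxQ _ hyQ (by abel) with hq' | he'
  · rw [sub_eq_zero] at hq'
    refine ⟨n, Nat.pos_of_ne_zero fun hn ↦ hq ?_, hq'.symm⟩
    rw [hq', hn, zero_smul]
  · rw [he', smul_zero] at hy
    exact absurd (eq_zero_of_nsmul_eq_zero_of_sharp hsharp he
      (Nat.sub_ne_zero_of_lt (Nat.mod_lt b ha)) hy.symm) hne

theorem exists_pos_nsmul_mem_of_nsmul_mem_closure {s : Set G} (hs : s ⊆ Q)
    (hsat : Q.NSMulSaturated) (hsharp : ∀ g ∈ Q, -g ∈ Q → g = 0) {e : G} (he : e ∈ Q)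
    (hne : e ≠ 0) (hirr : ∀ a ∈ Q, ∀ b ∈ Q, e = a + b → a = 0 ∨ b = 0)
    (hext : ∀ u ∈ Q, ∀ v ∈ Q, ∀ k : ℕ, 0 < k → k • e = u + v →
      ∃ p q m : ℕ, 0 < m ∧ m • u = p • e ∧ m • v = q • e)
    {k : ℕ} (hk : 0 < k) (h : k • e ∈ closure s) : ∃ n : ℕ, 0 < n ∧ n • e ∈ s := by
  have hsQ : closure s ≤ Q := closure_le.mpr hs
  suffices ∀ x ∈ closure s, ∀ k : ℕ, 0 < k → k • e = x → ∃ n : ℕ, 0 < n ∧ n • e ∈ s from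
    this _ h k hk rfl
  intro x hx
  induction hx using closure_induction with
  | mem x hx => exact fun k hk hkx ↦ ⟨k, hk, hkx ▸ hx⟩
  | zero =>
    exact fun k hk hk0 ↦
      absurd (eq_zero_of_nsmul_eq_zero_of_sharp hsharp he hk.ne' hk0) hne
  | add a b ha hb iha ihb =>
    intro k hk hkab
    by_cases ha0 : a = 0
    · exact ihb k hk (by rw [hkab, ha0, zero_add])
    obtain ⟨p, -, m, hm, hap, -⟩ := hext a (hsQ ha) b (hsQ hb) k hk hkab
    obtain ⟨n, hn, hna⟩ :=
      exists_pos_nsmul_eq_of_nsmul_eq_nsmul hsat hsharp he hne hirr ha0 hm hap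
    exact iha n hn hna

end AddSubmonoid

theorem irreducible_extremal_is_vertex_or_edge_general
    {V E G0 : Type*} [AddCommGroup G0]
    (initV finV : E → V) (c : E → ℕ)
    (Q : AddSubmonoid G0) (ev : V → G0) (el : E → G0)
    (hevQ : ∀ v, ev v ∈ Q) (helQ : ∀ l, el l ∈ Q)
    (hrel : ∀ l : E, ev (finV l) = ev (initV l) + c l • el l)
    (hsat : ∀ g : G0, (∃ n : ℕ, 0 < n ∧ n • g ∈ Q) → g ∈ Q)
    (hsharp : ∀ g ∈ Q, -g ∈ Q → g = 0)
    (helne : ∀ l : E, el l ≠ 0)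
    (hmul : ∀ a ∈ Q, ∃ m : ℕ, 0 < m ∧
      m • a ∈ AddSubmonoid.closure (Set.range ev ∪ Set.range el))
    (e : G0) (heQ : e ∈ Q) (hne : e ≠ 0)
    (hirr : ∀ a ∈ Q, ∀ b ∈ Q, e = a + b → a = 0 ∨ b = 0)
    (hext : ∀ u ∈ Q, ∀ v ∈ Q, ∀ k : ℕ, 0 < k → k • e = u + v →
      ∃ p q m : ℕ, 0 < m ∧ m • u = p • e ∧ m • v = q • e) :
    ∃ n : ℕ, 0 < n ∧
      ((∃ v : V, (¬ ∃ l : E, finV l = v ∧ 0 < c l) ∧ n • e = ev v) ∨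
        (∃ l : E, n • e = el l)) := by
  have hsat' : Q.NSMulSaturated := fun n g hng ↦
    (Nat.eq_zero_or_pos n).imp_right fun hn ↦ hsat g ⟨n, hn, hng⟩
  have hgenQ : Set.range ev ∪ Set.range el ⊆ Q := by
    rintro _ (⟨v, rfl⟩ | ⟨l, rfl⟩)
    exacts [hevQ v, helQ l]
  obtain ⟨m, hm, hme⟩ := hmul e heQ
  obtain ⟨n, hn, ⟨v, hv⟩ | ⟨l, hl⟩⟩ :=
    AddSubmonoid.exists_pos_nsmul_mem_of_nsmul_mem_closure hgenQ hsat' hsharp heQ hne hirr hext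
      hm hme
  · by_cases hmin : ∃ l : E, finV l = v ∧ 0 < c l
    · obtain ⟨l, rfl, hcl⟩ := hmin
      obtain ⟨-, p, j, hj, -, hjl⟩ := hext _ (hevQ (initV l)) _ (nsmul_mem (helQ l) (c l)) n hn
        (by rw [← hv, hrel l])
      rw [smul_smul] at hjl
      obtain ⟨n', hn', hn'l⟩ :=
        AddSubmonoid.exists_pos_nsmul_eq_of_nsmul_eq_nsmul hsat' hsharp heQ hne hirr
          (helne l) (Nat.mul_pos hj hcl) hjl
      exact ⟨n', hn', .inr ⟨l, hn'l⟩⟩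
    · exact ⟨n, hn, .inl ⟨v, hmin, hv.symm⟩⟩
  · exact ⟨n, hn, .inr ⟨l, hl.symm⟩⟩

/-- Let `G` be an admissible marked graph with associated fine saturated
sharp monoid `M̄(G)`, realized as a submonoid `Q` of its Grothendieck group `G0`, together
with the classes `ev : V → G0` of vertices and `el : E → G0` of edges satisfying the defining
relations.  The submonoid `N(G)` is the submonoid generated by the images of the `ev` and
`el`, and every element of `Q` has a positive multiple in `N(G)`.  If `e ∈ Q` is an
irreducible element lying on an extremal ray of the cone of `Q`, then there is a positive
integer `n` such that either `n • e = ev v` for some minimal vertex `v` (a vertex which is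
not the end vertex of any oriented edge), or `n • e = el l` for some edge `l`. -/
theorem irreducible_extremal_is_vertex_or_edge
    {V E G0 : Type*} [Fintype V] [Fintype E] [AddCommGroup G0]
    (initV finV : E → V) (c : E → ℕ) (nondeg : Set V)
    (Q : AddSubmonoid G0) (ev : V → G0) (el : E → G0)
    (hevQ : ∀ v, ev v ∈ Q) (helQ : ∀ l, el l ∈ Q)
    (hnond : ∀ v ∈ nondeg, ev v = 0)
    (hrel : ∀ l : E, ev (finV l) = ev (initV l) + c l • el l)
    (hQfg : Q.FG)
    (hgen : ∀ g : G0, ∃ a ∈ Q, ∃ b ∈ Q, g = a - b)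
    (hsat : ∀ g : G0, (∃ n : ℕ, 0 < n ∧ n • g ∈ Q) → g ∈ Q)
    (hsharp : ∀ g ∈ Q, -g ∈ Q → g = 0)
    (helne : ∀ l : E, el l ≠ 0)
    (hmul : ∀ a ∈ Q, ∃ m : ℕ, 0 < m ∧
      m • a ∈ AddSubmonoid.closure (Set.range ev ∪ Set.range el))
    (e : G0) (heQ : e ∈ Q) (hne : e ≠ 0)
    (hirr : ∀ a ∈ Q, ∀ b ∈ Q, e = a + b → a = 0 ∨ b = 0)
    (hext : ∀ u ∈ Q, ∀ v ∈ Q, ∀ k : ℕ, 0 < k → k • e = u + v →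
      ∃ p q m : ℕ, 0 < m ∧ m • u = p • e ∧ m • v = q • e) :
    ∃ n : ℕ, 0 < n ∧
      ((∃ v : V, (¬ ∃ l : E, finV l = v ∧ 0 < c l) ∧ n • e = ev v) ∨
        (∃ l : E, n • e = el l)) :=
  irreducible_extremal_is_vertex_or_edge_general initV finV c Q ev el hevQ helQ hrel hsat hsharp
    helne hmul e heQ hne hirr hext
end

section
/- Let P be a fine, saturated, sharp (toric) monoid. Then there exists a group homomorphism φ : P^gp → ℤ such that φ(u) > 0 for every nonzero element u ∈ P. Consequently, the map sending u ∈ P to φ(u) defines a monoid homomorphism P → ℕ whose preimage of 0 is {0}. -/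
/-!
Saturation and sharpness make `G = P^gp` torsion-free, so `G` is a free `ℤ`-module of finite rank,
and sharpness says that no nontrivial nonnegative integer combination of the nonzero generators of
`P` vanishes. Gordan's theorem then yields a linear form `G → ℤ` positive on every nonzero
generator, hence on every nonzero element of `P`.

Gordan's theorem is proved by induction on the number of vectors. If `f` is positive on `x i` for
`i ∈ s` but `f (x a) ≤ 0`, the projections `y i = f (x i) • x a - f (x a) • x i` still admit no
nonnegative relation; a form `k` positive on them gives `g = k (x a) • f - f (x a) • k` with
`g (x i) = k (y i) > 0` and `g (x a) = 0`, and `n • g + e` works for any `e` positive at `x a` and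
`n` large.
-/

open Finset Filter

section Gordan

variable {ι R M : Type*}

section

variable [Semiring R] [PartialOrder R] [AddCommMonoid M] [Module R M]

variable (R) in
def NonnegLinearIndepOn (x : ι → M) (s : Finset ι) : Prop :=
  ∀ c : ι → R, (∀ i ∈ s, 0 ≤ c i) → ∑ i ∈ s, c i • x i = 0 → ∀ i ∈ s, c i = 0

theorem NonnegLinearIndepOn.mono {x : ι → M} {s t : Finset ι} (h : NonnegLinearIndepOn R x t)
    (hst : s ⊆ t) : NonnegLinearIndepOn R x s := by
  classical
  intro c hc hsum i hi
  have := h (fun j => if j ∈ s then c j else 0) (fun j _ => by split_ifs <;> simp [*])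
    (by simpa [ite_smul, sum_ite_mem, inter_eq_right.2 hst] using hsum) i (hst hi)
  simpa [hi] using this

end

section

variable [CommRing R] [LinearOrder R] [IsStrictOrderedRing R] [AddCommGroup M] [Module R M]

namespace NonnegLinearIndepOn

variable {x : ι → M} {s : Finset ι}

theorem ne_zero (h : NonnegLinearIndepOn R x s) {i : ι} (hi : i ∈ s) : x i ≠ 0 := by
  classical
  intro hxi
  have := h (Pi.single i 1) (fun j _ => by simp [Pi.single_apply]; split_ifs <;> simp)
    (by simp [Pi.single_apply, ite_smul, hxi]) i hi
  simp at this

theorem project [DecidableEq ι] {a : ι} (h : NonnegLinearIndepOn R x (insert a s)) (ha : a ∉ s)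
    {f : Module.Dual R M} (hf : ∀ i ∈ s, 0 < f (x i)) (hfa : f (x a) ≤ 0) :
    NonnegLinearIndepOn R (fun i => f (x i) • x a - f (x a) • x i) s := by
  intro b hb hsum
  set c := Function.update (fun i => -f (x a) * b i) a (∑ i ∈ s, b i * f (x i))
  have hc_of_mem : ∀ i ∈ s, c i = -f (x a) * b i := fun i hi =>
    Function.update_of_ne (ne_of_mem_of_not_mem hi ha) _ _
  have hc_nonneg : ∀ i ∈ insert a s, 0 ≤ c i := by
    refine (forall_mem_insert _ _ _).2 ⟨?_, fun i hi => ?_⟩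
    · simpa [c] using sum_nonneg fun i hi => mul_nonneg (hb i hi) (hf i hi).le
    · simpa [hc_of_mem i hi] using mul_nonneg (neg_nonneg.2 hfa) (hb i hi)
  have hc_sum : ∑ i ∈ insert a s, c i • x i = 0 := by
    rw [sum_insert ha, sum_congr rfl fun i hi => by rw [hc_of_mem i hi], ← hsum]
    simp only [c, Function.update_self, smul_sub, sum_sub_distrib, sum_smul, smul_smul]
    rw [sub_eq_add_neg, ← sum_neg_distrib]
    exact congrArg _ (sum_congr rfl fun i _ => by rw [← neg_smul, neg_mul, mul_comm])
  have hca := h c hc_nonneg hc_sum a (mem_insert_self a s)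
  simp only [c, Function.update_self] at hca
  intro i hi
  have := (sum_eq_zero_iff_of_nonneg fun j hj => mul_nonneg (hb j hj) (hf j hj).le).1 hca i hi
  exact (mul_eq_zero.1 this).resolve_right (hf i hi).ne'

end NonnegLinearIndepOn

variable (R) in
theorem Module.Projective.exists_dual_pos [Module.Projective R M] {z : M} (hz : z ≠ 0) :
    ∃ e : Module.Dual R M, 0 < e z := by
  obtain ⟨e, he⟩ := Module.Projective.exists_dual_ne_zero R hz
  rcases he.lt_or_gt with hneg | hpos
  · exact ⟨-e, by simpa using hneg⟩
  · exact ⟨e, hpos⟩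

theorem exists_dual_pos_insert [Archimedean R] [DecidableEq ι] {x : ι → M} {s : Finset ι} {a : ι}
    {g e : Module.Dual R M} (hg : ∀ i ∈ s, 0 < g (x i)) (hga : g (x a) = 0) (he : 0 < e (x a)) :
    ∃ f : Module.Dual R M, ∀ i ∈ insert a s, 0 < f (x i) := by
  obtain ⟨n, hn⟩ : ∃ n : ℕ, ∀ i ∈ s, -e (x i) < n • g (x i) :=
    ((eventually_all_finset s).2 fun i hi =>
      (tendsto_id.atTop_nsmul_const (hg i hi)).eventually_gt_atTop _).exists
  refine ⟨n • g + e, (forall_mem_insert _ _ _).2 ⟨by simpa [hga] using he, fun i hi => ?_⟩⟩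
  simpa [add_comm] using neg_lt_iff_pos_add.1 (hn i hi)

theorem NonnegLinearIndepOn.exists_dual_pos [Archimedean R] [Module.Projective R M]
    {x : ι → M} {s : Finset ι} (h : NonnegLinearIndepOn R x s) :
    ∃ f : Module.Dual R M, ∀ i ∈ s, 0 < f (x i) := by
  classical
  induction s using Finset.induction_on generalizing x with
  | empty => exact ⟨0, by simp⟩
  | insert a s ha ih =>
    obtain ⟨f, hf⟩ := ih (h.mono (subset_insert a s))
    by_cases hfa : 0 < f (x a)
    · exact ⟨f, (forall_mem_insert _ _ _).2 ⟨hfa, hf⟩⟩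
    obtain ⟨k, hk⟩ := ih (h.project ha hf (not_lt.1 hfa))
    obtain ⟨e, he⟩ := Module.Projective.exists_dual_pos R (h.ne_zero (mem_insert_self a s))
    refine exists_dual_pos_insert (g := k (x a) • f - f (x a) • k) (fun i hi => ?_) ?_ he
    · simpa [mul_comm] using hk i hi
    · simp [mul_comm]

end

end Gordan

section SharpMonoid

variable {ι G : Type*} [AddCommGroup G] {P : AddSubmonoid G}

theorem eq_zero_of_sum_eq_zero_of_sharp (hsharp : ∀ g ∈ P, -g ∈ P → g = 0) {s : Finset ι}
    {v : ι → G} (hv : ∀ i ∈ s, v i ∈ P) (hsum : ∑ i ∈ s, v i = 0) {i : ι} (hi : i ∈ s) :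
    v i = 0 := by
  classical
  refine hsharp _ (hv i hi) ?_
  rw [neg_eq_of_add_eq_zero_right ((add_sum_erase s v hi).trans hsum)]
  exact sum_mem fun j hj => hv j (mem_of_mem_erase hj)

theorem isAddTorsionFree_of_saturated_of_sharp
    (hsat : ∀ g : G, (∃ n : ℕ, 0 < n ∧ n • g ∈ P) → g ∈ P)
    (hsharp : ∀ g ∈ P, -g ∈ P → g = 0) : IsAddTorsionFree G := by
  refine IsAddTorsionFree.of_not_isOfFinAddOrder fun g hg hfin => hg ?_
  obtain ⟨n, hn, hng⟩ := isOfFinAddOrder_iff_nsmul_eq_zero.1 hfin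
  exact hsharp g (hsat g ⟨n, hn, hng ▸ P.zero_mem⟩)
    (hsat (-g) ⟨n, hn, by rw [smul_neg, hng, neg_zero]; exact P.zero_mem⟩)

theorem module_finite_int_of_fg (hfg : P.FG) (hgen : ∀ g : G, ∃ a ∈ P, ∃ b ∈ P, g = a - b) :
    Module.Finite ℤ G := by
  obtain ⟨s, rfl⟩ := hfg
  refine ⟨⟨s, eq_top_iff.2 fun g _ => ?_⟩⟩
  obtain ⟨a, ha, b, hb, rfl⟩ := hgen g
  rw [← Submodule.span_closure]
  exact sub_mem (Submodule.subset_span ha) (Submodule.subset_span hb)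

theorem nonnegLinearIndepOn_of_sharp [IsAddTorsionFree G] (hsharp : ∀ g ∈ P, -g ∈ P → g = 0)
    {s : Finset G} (hsP : ∀ x ∈ s, x ∈ P) (hs0 : 0 ∉ s) : NonnegLinearIndepOn ℤ id s := by
  intro c hc hsum x hx
  have hcP : ∀ y ∈ s, c y • y ∈ P := fun y hy => by
    rw [← Int.toNat_of_nonneg (hc y hy), natCast_zsmul]
    exact nsmul_mem (hsP y hy) _
  exact (smul_eq_zero.1 (eq_zero_of_sum_eq_zero_of_sharp hsharp hcP hsum hx)).resolve_right
    (ne_of_mem_of_not_mem hx hs0)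

end SharpMonoid

theorem AddSubmonoid.eq_zero_or_pos_of_mem_closure {M N : Type*} [AddMonoid M] [AddCommMonoid N]
    [PartialOrder N] [IsOrderedCancelAddMonoid N] (f : M →+ N) {s : Set M}
    (hs : ∀ x ∈ s, x ≠ 0 → 0 < f x) {u : M} (hu : u ∈ closure s) : u = 0 ∨ 0 < f u := by
  induction hu using closure_induction with
  | mem x hx => exact or_iff_not_imp_left.2 (hs x hx)
  | zero => exact .inl rfl
  | add x y _ _ hx hy =>
    rcases hx with rfl | hx
    · simpa using hy
    rcases hy with rfl | hy
    · simpa using Or.inr hx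
    · exact .inr (by simpa using add_pos hx hy)

/-- Let `P` be a fine, saturated, sharp (toric) monoid, realized as a
submonoid of its Grothendieck group `G`.  Then there exists a group homomorphism
`φ : G = P^gp → ℤ` which is strictly positive on every nonzero element of `P`; in
particular `φ` restricts to a monoid homomorphism `P → ℕ` whose preimage of `0` is `{0}`. -/
theorem toric_monoid_exists_strictly_positive_functional
    {G : Type*} [AddCommGroup G] (P : AddSubmonoid G)
    (hfg : P.FG)
    (hgen : ∀ g : G, ∃ a ∈ P, ∃ b ∈ P, g = a - b)
    (hsat : ∀ g : G, (∃ n : ℕ, 0 < n ∧ n • g ∈ P) → g ∈ P)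
    (hsharp : ∀ g ∈ P, -g ∈ P → g = 0) :
    ∃ φ : G →+ ℤ, (∀ u ∈ P, u ≠ 0 → 0 < φ u) ∧ (∀ u ∈ P, 0 ≤ φ u) ∧
      (∀ u ∈ P, φ u = 0 → u = 0) := by
  classical
  have := isAddTorsionFree_of_saturated_of_sharp hsat hsharp
  have := module_finite_int_of_fg hfg hgen
  obtain ⟨s, rfl⟩ := hfg
  have hgens : NonnegLinearIndepOn ℤ id (s.erase 0) :=
    nonnegLinearIndepOn_of_sharp hsharp
      (fun x hx => AddSubmonoid.subset_closure (mem_of_mem_erase hx)) (notMem_erase 0 s)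
  obtain ⟨f, hf⟩ := hgens.exists_dual_pos
  have hpos (u : G) (hu : u ∈ AddSubmonoid.closure (s : Set G)) : u = 0 ∨ 0 < f u :=
    AddSubmonoid.eq_zero_or_pos_of_mem_closure f.toAddMonoidHom
      (fun x hx hx0 => hf x (mem_erase.2 ⟨hx0, hx⟩)) hu
  exact ⟨f.toAddMonoidHom, fun u hu hu0 => (hpos u hu).resolve_left hu0,
    fun u hu => (hpos u hu).elim (by rintro rfl; simp) le_of_lt,
    fun u hu hfu => (hpos u hu).resolve_right hfu.not_gt⟩
end

section
/- Let G be a marked graph and let G' be obtained from G by: (i) contracting a set S of edges l with the property that the images of the associated elements e_l vanish under a given monoid surjection q : M̄(G) → Q onto a fine saturated sharp monoid Q, identifying the associated elements of the endpoints of contracted edges, and (ii) declaring a vertex v nondegenerate in G' whenever q(e_v) = 0. Suppose q^gp : M̄(G)^gp → Q^gp is surjective with kernel generated by { e ∈ M̄(G)^gp : q^gp(e) torsion or zero } = K^gp, and that the analogous canonical construction for G' yields a surjection (q')^gp : M̄(G)^gp → M̄(G')^gp with the same kernel K^gp. Then the induced canonical map M̄(G') → Q is an isomorphism of fine saturated monoids.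 -/
/-- Let `G` be a marked graph with associated fine saturated sharp monoid
`M̄(G)`, realized as a submonoid `P` of its Grothendieck group `A`, and let `G'` be obtained
from `G` by contracting edges killed by a surjection `q : M̄(G) → Q` onto a fine saturated
sharp monoid and declaring nondegenerate the vertices killed by `q`.  As in the paper, the
associated monoids are encoded by the induced maps on Grothendieck groups: `q^gp = f : A → B`
is surjective with `Q` the saturation of the image of `P`, and the canonical construction for
`G'` yields `(q')^gp = f' : A → C` surjective with the same kernel, with `M̄(G') = Q'` the
saturation of the image of `P`.  Then the induced canonical map `M̄(G') → Q` is an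
isomorphism of fine saturated monoids: there is a group isomorphism `h : C ≃+ B` compatible
with `f` and `f'`, carrying `Q'` exactly onto `Q`. -/
theorem contracted_graph_monoid_iso
    {A B C : Type*} [AddCommGroup A] [AddCommGroup B] [AddCommGroup C]
    (P : AddSubmonoid A) (Q : AddSubmonoid B) (Q' : AddSubmonoid C)
    (hPfg : P.FG)
    (hPgen : ∀ a : A, ∃ x ∈ P, ∃ y ∈ P, a = x - y)
    (hPsat : ∀ a : A, (∃ n : ℕ, 0 < n ∧ n • a ∈ P) → a ∈ P)
    (hPsharp : ∀ a ∈ P, -a ∈ P → a = 0)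
    (f : A →+ B) (f' : A →+ C)
    (hfsurj : Function.Surjective f) (hf'surj : Function.Surjective f')
    (hker : f.ker = f'.ker)
    (hQ : ∀ b : B, b ∈ Q ↔ ∃ n : ℕ, 0 < n ∧ ∃ a ∈ P, n • b = f a)
    (hQ' : ∀ c : C, c ∈ Q' ↔ ∃ n : ℕ, 0 < n ∧ ∃ a ∈ P, n • c = f' a) :
    ∃ h : C ≃+ B, (∀ a : A, h (f' a) = f a) ∧ ∀ c : C, c ∈ Q' ↔ h c ∈ Q := by
  let e1 : A ⧸ f.ker ≃+ B := QuotientAddGroup.quotientKerEquivOfSurjective f hfsurj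
  let e2 : A ⧸ f'.ker ≃+ C := QuotientAddGroup.quotientKerEquivOfSurjective f' hf'surj
  let e0 : (A ⧸ f.ker) ≃+ (A ⧸ f'.ker) := QuotientAddGroup.quotientAddEquivOfEq hker
  refine ⟨e2.symm.trans (e0.symm.trans e1), ?_, ?_⟩
  · intro a
    have h2 : e2 (QuotientAddGroup.mk a) = f' a := rfl
    have h1 : e1 (QuotientAddGroup.mk a) = f a := rfl
    have h0 : e0 (QuotientAddGroup.mk a) = QuotientAddGroup.mk a := rfl
    simp only [AddEquiv.trans_apply]
    rw [← h2, AddEquiv.symm_apply_apply, ← h0, AddEquiv.symm_apply_apply, h1]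
  · intro c
    obtain ⟨a, rfl⟩ := hf'surj c
    have hcomp : (e2.symm.trans (e0.symm.trans e1)) (f' a) = f a := by
      have h2 : e2 (QuotientAddGroup.mk a) = f' a := rfl
      have h1 : e1 (QuotientAddGroup.mk a) = f a := rfl
      have h0 : e0 (QuotientAddGroup.mk a) = QuotientAddGroup.mk a := rfl
      simp only [AddEquiv.trans_apply]
      rw [← h2, AddEquiv.symm_apply_apply, ← h0, AddEquiv.symm_apply_apply, h1]
    rw [hQ', hcomp, hQ]
    constructor
    · rintro ⟨n, hn, x, hx, hnx⟩
      refine ⟨n, hn, x, hx, ?_⟩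
      have : n • (f' a) = f' x := by rw [← map_nsmul] at hnx ⊢; exact hnx
      have hk : n • a - x ∈ f'.ker := by
        rw [AddMonoidHom.mem_ker, map_sub, map_nsmul, this, sub_self]
      rw [← hker, AddMonoidHom.mem_ker, map_sub, map_nsmul, sub_eq_zero] at hk
      exact hk
    · rintro ⟨n, hn, x, hx, hnx⟩
      refine ⟨n, hn, x, hx, ?_⟩
      have hk : n • a - x ∈ f.ker := by
        rw [AddMonoidHom.mem_ker, map_sub, map_nsmul, hnx, sub_self]
      rw [hker, AddMonoidHom.mem_ker, map_sub, map_nsmul, sub_eq_zero] at hk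
      exact hk
end

section
/- Let f : P → Q1 and g : P → Q2 be surjective homomorphisms of fine saturated commutative monoids such that the induced group homomorphisms f^gp : P^gp → Q1^gp and g^gp : P^gp → Q2^gp are surjective with equal kernels, and such that Q_i equals the saturation of the image of P in P^gp/ker(f^gp) for i = 1,2. Then there is a unique isomorphism h : Q1 → Q2 with h ∘ f = g. -/
/-- Let `f : P → Q1` and `g : P → Q2` be surjective homomorphisms of fine
saturated commutative monoids (realized inside their Grothendieck groups `A`, `B`, `C`: the
induced group maps are `F : A → B` and `Gm : A → C`), such that `F` and `Gm` are surjective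
with equal kernels and each `Q_i` is the saturation of the image of `P` in the quotient
group.  Then there is a unique isomorphism `h : Q1 → Q2` with `h ∘ f = g`, i.e. a unique
group isomorphism `h : B ≃+ C` with `h ∘ F = Gm` carrying `Q1` exactly onto `Q2`. -/
theorem unique_iso_of_surjections_with_equal_kernels
    {A B C : Type*} [AddCommGroup A] [AddCommGroup B] [AddCommGroup C]
    (P : AddSubmonoid A) (Q1 : AddSubmonoid B) (Q2 : AddSubmonoid C)
    (hPfg : P.FG)
    (hPgen : ∀ a : A, ∃ x ∈ P, ∃ y ∈ P, a = x - y)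
    (hPsat : ∀ a : A, (∃ n : ℕ, 0 < n ∧ n • a ∈ P) → a ∈ P)
    (hPsharp : ∀ a ∈ P, -a ∈ P → a = 0)
    (F : A →+ B) (Gm : A →+ C)
    (hFsurj : Function.Surjective F) (hGsurj : Function.Surjective Gm)
    (hker : F.ker = Gm.ker)
    (hFP : ∀ a ∈ P, F a ∈ Q1) (hFPsurj : ∀ b ∈ Q1, ∃ a ∈ P, F a = b)
    (hGP : ∀ a ∈ P, Gm a ∈ Q2) (hGPsurj : ∀ c ∈ Q2, ∃ a ∈ P, Gm a = c)
    (hQ1 : ∀ b : B, b ∈ Q1 ↔ ∃ n : ℕ, 0 < n ∧ ∃ a ∈ P, n • b = F a)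
    (hQ2 : ∀ c : C, c ∈ Q2 ↔ ∃ n : ℕ, 0 < n ∧ ∃ a ∈ P, n • c = Gm a) :
    ∃! h : B ≃+ C, (∀ a : A, h (F a) = Gm a) ∧ ∀ b : B, b ∈ Q1 ↔ h b ∈ Q2 := by

  classical
  -- key: equal values
  have key : ∀ a a' : A, F a = F a' → Gm a = Gm a' := by
    intro a a' h
    have : a - a' ∈ F.ker := by simp [AddMonoidHom.mem_ker, h]
    rw [hker, AddMonoidHom.mem_ker, map_sub, sub_eq_zero] at this
    exact this
  have key' : ∀ a a' : A, Gm a = Gm a' → F a = F a' := by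
    intro a a' h
    have : a - a' ∈ Gm.ker := by simp [AddMonoidHom.mem_ker, h]
    rw [← hker, AddMonoidHom.mem_ker, map_sub, sub_eq_zero] at this
    exact this
  set sF := Function.surjInv hFsurj with hsF
  set sG := Function.surjInv hGsurj with hsG
  have hsFspec : ∀ b, F (sF b) = b := fun b => Function.surjInv_eq hFsurj b
  have hsGspec : ∀ c, Gm (sG c) = c := fun c => Function.surjInv_eq hGsurj c
  let hBC : B →+ C :=
    { toFun := fun b => Gm (sF b)
      map_zero' := by
        have : F (sF 0) = F 0 := by simp [hsFspec]
        simpa using key _ _ this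
      map_add' := by
        intro b1 b2
        have : F (sF (b1 + b2)) = F (sF b1 + sF b2) := by simp [hsFspec]
        simpa using key _ _ this }
  let hCB : C →+ B :=
    { toFun := fun c => F (sG c)
      map_zero' := by
        have : Gm (sG 0) = Gm 0 := by simp [hsGspec]
        simpa using key' _ _ this
      map_add' := by
        intro c1 c2
        have : Gm (sG (c1 + c2)) = Gm (sG c1 + sG c2) := by simp [hsGspec]
        simpa using key' _ _ this }
  have li : ∀ b, hCB (hBC b) = b := by
    intro b
    show F (sG (Gm (sF b))) = b
    have : Gm (sG (Gm (sF b))) = Gm (sF b) := hsGspec _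
    have := key' _ _ this
    rw [this, hsFspec]
  have ri : ∀ c, hBC (hCB c) = c := by
    intro c
    show Gm (sF (F (sG c))) = c
    have : F (sF (F (sG c))) = F (sG c) := hsFspec _
    have := key _ _ this
    rw [this, hsGspec]
  let h : B ≃+ C :=
    { toFun := hBC, invFun := hCB, left_inv := li, right_inv := ri,
      map_add' := hBC.map_add }
  have hcomm : ∀ a : A, h (F a) = Gm a := by
    intro a
    show Gm (sF (F a)) = Gm a
    exact key _ _ (hsFspec _)
  refine ⟨h, ⟨hcomm, ?_⟩, ?_⟩
  · intro b
    constructor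
    · intro hb
      obtain ⟨n, hn, a, ha, hna⟩ := (hQ1 b).1 hb
      refine (hQ2 (h b)).2 ⟨n, hn, a, ha, ?_⟩
      rw [← hcomm a, ← hna, ← map_nsmul]
    · intro hb
      obtain ⟨n, hn, a, ha, hna⟩ := (hQ2 (h b)).1 hb
      refine (hQ1 b).2 ⟨n, hn, a, ha, ?_⟩
      have : h (n • b) = h (F a) := by rw [map_nsmul, hna, hcomm]
      exact h.injective this
  · intro h' ⟨hc', _⟩
    ext b
    obtain ⟨a, rfl⟩ := hFsurj b
    rw [hc', hcomm]
end
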